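/- Let n ≥ 2, 0 < σ < 1/2, α > 0 and 1 ≤ p ≤ n/α. There exist constants c, C > 0 depending only on n, σ, α and p such that for all 0 < δ < 1 with δ^σ ≤ 1/2, δ^{1-σ} ≤ 1/40 and δ^{1-2σ} ≤ 1/80, the indicator V = χ_Ω satisfies c · max{1, δ^{σ(n+1)/p - α}} ≤ ‖V‖_{𝓛^{α,p}} ≤ C · max{1, δ^{σ(n+1)/p - α}}. -/

import Mathlib

open Real MeasureTheory ENNReal

/-- The Morrey–Campanato norm
`‖V‖_{𝓛^{α,p}} = sup_{x,r>0} r^α (r^{-n} ∫_{B(x,r)} V^p)^{1/p}` (valued in `ℝ≥0∞`). -/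
noncomputable def morreyNorm (n : ℕ) (α p : ℝ) (V : EuclideanSpace ℝ (Fin n) → ℝ) : ℝ≥0∞ :=
  ⨆ (x : EuclideanSpace ℝ (Fin n)) (r : ℝ) (_ : 0 < r),
    ENNReal.ofReal (r ^ α) *
      (ENNReal.ofReal (r ^ (-(n : ℝ))) *
        ∫⁻ y in Metric.ball x r, ENNReal.ofReal (V y ^ p)) ^ (1/p)

open Metric Finset

/-! With `s = δ^σ`, `Λ` is a box grid of spacing `s⁻¹` in the first `n - 1` directions and
`2 s⁻²` in the last one, with about `s / δ` resp. `s² / δ` points per direction, and for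
`V = χ_Ω` the quantity `∫_{B(x,r)} V^p` is just `|Ω ∩ B(x,r)|`. A ball of radius `r ≥ 1` meets
at most `5ⁿ min(max(1, r s), s/δ)^{n-1} min(max(1, r s²), s²/δ)` of the unit balls of `Ω`;
comparing this with `r^{n - αp}` in the regimes cut out by `s⁻¹ ≤ s⁻² ≤ δ⁻¹` gives the upper
bound. For the lower bound, `B(0,1) ⊆ Ω`, and `B(0, n/δ)` contains all the (disjoint) unit
balls around `Λ`, of total volume `≳ s^{n+1} / δⁿ`. -/

lemma card_filter_abs_natCast_mul_sub_le {a ρ x : ℝ} (ha : 0 < a) (hρ : 0 ≤ ρ) (s : Finset ℕ) :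
    (#{k ∈ s | |((k : ℕ) : ℝ) * a - x| ≤ ρ} : ℝ) ≤ 2 * ρ / a + 1 := by
  set F := {k ∈ s | |((k : ℕ) : ℝ) * a - x| ≤ ρ}
  rcases F.eq_empty_or_nonempty with hF | hF
  · rw [hF, card_empty, Nat.cast_zero]
    positivity
  have hsub : F ⊆ Icc (F.min' hF) (F.min' hF + ⌊2 * ρ / a⌋₊) := by
    intro k hk
    refine mem_Icc.2 ⟨F.min'_le k hk, ?_⟩
    have hk0 := (mem_filter.1 (F.min'_mem hF)).2
    have hk1 := (mem_filter.1 hk).2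
    rw [← Nat.sub_le_iff_le_add', Nat.le_floor_iff (by positivity), le_div_iff₀ ha,
      Nat.cast_sub (F.min'_le k hk)]
    rw [abs_le] at hk0 hk1
    linarith
  calc (#F : ℝ) ≤ #(Icc (F.min' hF) (F.min' hF + ⌊2 * ρ / a⌋₊)) := by
        exact_mod_cast card_le_card hsub
    _ = ⌊2 * ρ / a⌋₊ + 1 := by
        rw [Nat.card_Icc, add_assoc, Nat.add_sub_cancel_left, Nat.cast_succ]
    _ ≤ 2 * ρ / a + 1 := by gcongr; exact Nat.floor_le (by positivity)

lemma prod_ite_lt_pred {M : Type*} [CommMonoid M] {n : ℕ} (hn : 0 < n) (A B : M) :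
    ∏ j : Fin n, (if (j : ℕ) < n - 1 then A else B) = A ^ (n - 1) * B := by
  obtain ⟨k, rfl⟩ := Nat.exists_eq_add_of_le' hn
  rw [Fin.prod_univ_castSucc]
  simp

section Grid

variable {ι : Type*}

noncomputable def gridPoint (a : ι → ℝ) (m : ι → ℕ) : EuclideanSpace ℝ ι :=
  WithLp.toLp 2 fun j => m j * a j

@[simp]
lemma gridPoint_apply (a : ι → ℝ) (m : ι → ℕ) (j : ι) : gridPoint a m j = m j * a j := rfl

variable [Fintype ι]

lemma EuclideanSpace.norm_le_sum_abs (v : EuclideanSpace ℝ ι) : ‖v‖ ≤ ∑ i, |v i| := by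
  rw [EuclideanSpace.norm_eq, Real.sqrt_le_left (by positivity)]
  exact sum_sq_le_sq_sum_of_nonneg fun i _ => norm_nonneg (v i)

lemma disjoint_ball_gridPoint {a : ι → ℝ} (ha : ∀ j, 2 ≤ a j) {m m' : ι → ℕ} (h : m ≠ m') :
    Disjoint (ball (gridPoint a m) 1) (ball (gridPoint a m') 1) := by
  obtain ⟨j, hj⟩ := Function.ne_iff.1 h
  apply ball_disjoint_ball
  have hone : (1 : ℝ) ≤ |(m j : ℝ) - m' j| := by
    exact_mod_cast Int.one_le_abs (sub_ne_zero.2 (Int.ofNat_inj.not.2 hj))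
  calc (1 : ℝ) + 1 ≤ |(m j : ℝ) - m' j| * a j := by nlinarith [ha j]
    _ = dist (gridPoint a m j) (gridPoint a m' j) := by
        rw [Real.dist_eq, gridPoint_apply, gridPoint_apply, ← sub_mul, abs_mul,
          abs_of_nonneg (a := a j) (by linarith [ha j])]
    _ ≤ dist (gridPoint a m) (gridPoint a m') := PiLp.dist_apply_le _ _ j

lemma volume_biUnion_closedBall_inter_ball_le {κ : Type*} (s : Finset κ)
    (c : κ → EuclideanSpace ℝ ι) (x : EuclideanSpace ℝ ι) (r : ℝ) :
    volume ((⋃ m ∈ s, closedBall (c m) 1) ∩ ball x r)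
      ≤ #{m ∈ s | dist (c m) x ≤ r + 1} * volume (ball (0 : EuclideanSpace ℝ ι) 1) := by
  classical
  calc volume ((⋃ m ∈ s, closedBall (c m) 1) ∩ ball x r)
      ≤ volume (⋃ m ∈ {m ∈ s | dist (c m) x ≤ r + 1}, closedBall (c m) 1) := by
        refine measure_mono ?_
        rintro y ⟨hy, hyx⟩
        obtain ⟨m, hm, hym⟩ := Set.mem_iUnion₂.1 hy
        refine Set.mem_iUnion₂.2 ⟨m, mem_filter.2 ⟨hm, ?_⟩, hym⟩
        linarith [dist_triangle (c m) y x, mem_closedBall'.1 hym, mem_ball.1 hyx]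
    _ ≤ ∑ m ∈ {m ∈ s | dist (c m) x ≤ r + 1}, volume (closedBall (c m) 1) :=
        measure_biUnion_finset_le _ _
    _ = _ := by
        simp only [Measure.addHaar_closedBall_center,
          Measure.addHaar_unitClosedBall_eq_addHaar_unitBall, sum_const, nsmul_eq_mul]

variable [DecidableEq ι]

def gridBox (M : ι → ℕ) : Finset (ι → ℕ) :=
  Fintype.piFinset fun j => Iic (M j)

lemma mem_gridBox {M m : ι → ℕ} : m ∈ gridBox M ↔ ∀ j, m j ≤ M j := by
  simp [gridBox]

lemma card_gridBox (M : ι → ℕ) : #(gridBox M) = ∏ j, (M j + 1) := by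
  simp [gridBox]

lemma norm_gridPoint_le {a : ι → ℝ} (ha : ∀ j, 0 ≤ a j) {M m : ι → ℕ} (hm : m ∈ gridBox M) :
    ‖gridPoint a m‖ ≤ ∑ j, M j * a j := by
  refine (EuclideanSpace.norm_le_sum_abs _).trans (sum_le_sum fun j _ => ?_)
  rw [gridPoint_apply, abs_of_nonneg (by have := ha j; positivity)]
  gcongr
  · exact ha j
  · exact mem_gridBox.1 hm j

lemma volume_biUnion_ball_gridPoint {a : ι → ℝ} (ha : ∀ j, 2 ≤ a j) (M : ι → ℕ) :
    volume (⋃ m ∈ gridBox M, ball (gridPoint a m) 1)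
      = (∏ j, (M j + 1) : ℕ) * volume (ball (0 : EuclideanSpace ℝ ι) 1) := by
  rw [measure_biUnion_finset (fun m _ m' _ h => disjoint_ball_gridPoint ha h)
      (fun _ _ => measurableSet_ball)]
  simp only [Measure.addHaar_ball_center, sum_const, card_gridBox, nsmul_eq_mul]

lemma card_filter_dist_gridPoint_le {a : ι → ℝ} (ha : ∀ j, 0 < a j) (M : ι → ℕ)
    (x : EuclideanSpace ℝ ι) {ρ : ℝ} (hρ : 0 ≤ ρ) :
    (#{m ∈ gridBox M | dist (gridPoint a m) x ≤ ρ} : ℝ)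
      ≤ ∏ j, min (2 * ρ / a j + 1) (M j + 1) := by
  have hsub : {m ∈ gridBox M | dist (gridPoint a m) x ≤ ρ}
      ⊆ Fintype.piFinset fun j => {k ∈ Iic (M j) | |((k : ℕ) : ℝ) * a j - x j| ≤ ρ} := by
    intro m hm
    obtain ⟨hmM, hmx⟩ := mem_filter.1 hm
    refine Fintype.mem_piFinset.2 fun j => mem_filter.2 ⟨mem_Iic.2 (mem_gridBox.1 hmM j), ?_⟩
    rw [← gridPoint_apply, ← Real.dist_eq]
    exact (PiLp.dist_apply_le _ _ j).trans hmx
  calc (#{m ∈ gridBox M | dist (gridPoint a m) x ≤ ρ} : ℝ)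
      ≤ ∏ j, (#{k ∈ Iic (M j) | |((k : ℕ) : ℝ) * a j - x j| ≤ ρ} : ℝ) := by
        rw [← Nat.cast_prod, ← Fintype.card_piFinset]
        exact_mod_cast card_le_card hsub
    _ ≤ ∏ j, min (2 * ρ / a j + 1) (M j + 1) := by
        gcongr with j
        refine le_min (card_filter_abs_natCast_mul_sub_le (ha j) hρ _) ?_
        exact_mod_cast (card_filter_le _ _).trans (Nat.card_Iic _).le

end Grid

lemma pow_le_rpow_one_sub_mul_max_one {k : ℕ} {s δ β r : ℝ} (hs0 : 0 < s) (hs1 : s ≤ 1)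
    (hδ : 0 < δ) (hδs : δ ≤ s ^ 2) (hβk : β ≤ k + 1) (hrs : 1 ≤ r * s) (hrδ : r * δ ≤ 1) :
    s ^ k ≤ r ^ (1 - β) * max 1 (s ^ (k + 1 + 1) * δ ^ (-β)) := by
  have hr0 : 0 < r := pos_of_mul_pos_left (by linarith) hs0.le
  rcases le_total β 1 with hβ1 | hβ1
  · calc s ^ k ≤ s ^ (β - 1) := by
          rw [← Real.rpow_natCast]; exact Real.rpow_le_rpow_of_exponent_ge hs0 hs1 (by linarith)
      _ = s⁻¹ ^ (1 - β) := by rw [Real.inv_rpow hs0.le, ← Real.rpow_neg hs0.le]; ring_nf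
      _ ≤ r ^ (1 - β) :=
          Real.rpow_le_rpow (by positivity) ((inv_le_iff_one_le_mul₀ hs0).2 (by linarith))
            (by linarith)
      _ ≤ _ := le_mul_of_one_le_right (by positivity) (le_max_left _ _)
  · -- `r δ ≤ 1` and `δ ≤ s²` absorb the growth of `r ^ (β - 1)`
    calc s ^ k ≤ s ^ k * ((s ^ 2 / δ) * ((r * δ) ^ (β - 1))⁻¹) := by
          refine le_mul_of_one_le_right (by positivity) (one_le_mul_of_one_le_of_one_le ?_ ?_)
          · rwa [one_le_div hδ]
          · exact one_le_inv₀ (by positivity) |>.2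
              (Real.rpow_le_one (by positivity) hrδ (by linarith))
      _ = r ^ (1 - β) * (s ^ (k + 1 + 1) * δ ^ (-β)) := by
          rw [← Real.rpow_neg (by positivity), Real.mul_rpow hr0.le hδ.le, neg_sub,
            show -β = (1 - β) - 1 by ring, Real.rpow_sub_one hδ.ne']
          field_simp
          ring
      _ ≤ _ := by gcongr; exact le_max_right _ _

lemma max_one_pow_mul_max_one_le {n : ℕ} {s δ β r : ℝ} (hn : 1 ≤ n) (hs0 : 0 < s) (hs1 : s ≤ 1)
    (hδ : 0 < δ) (hδs : δ ≤ s ^ 2) (hβ0 : 0 ≤ β) (hβn : β ≤ n) (hr1 : 1 ≤ r) (hrδ : r ≤ δ⁻¹) :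
    max 1 (r * s) ^ (n - 1) * max 1 (r * s ^ 2)
      ≤ max 1 (s ^ (n + 1) * δ ^ (-β)) * r ^ ((n : ℝ) - β) := by
  obtain ⟨k, rfl⟩ := Nat.exists_eq_add_of_le' hn
  push_cast at hβn ⊢
  have hr0 : 0 < r := by linarith
  have hrδ1 : r * δ ≤ 1 := by rwa [← le_inv_mul_iff₀' hδ, mul_one]
  have hsplit : r ^ ((k : ℝ) + 1 - β) = r ^ k * r ^ (1 - β) := by
    rw [← Real.rpow_natCast, ← Real.rpow_add hr0]; ring_nf
  rw [hsplit]
  have hrs2 : r * s ^ 2 ≤ r * s := by gcongr; nlinarith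
  rcases le_total (r * s) 1 with hA | hA
  · rw [max_eq_left hA, max_eq_left (hrs2.trans hA), one_pow, mul_one, ← hsplit]
    exact one_le_mul_of_one_le_of_one_le (le_max_left _ _) (Real.one_le_rpow hr1 (by linarith))
  rcases le_total (r * s ^ 2) 1 with hB | hB
  · rw [max_eq_right hA, max_eq_left hB, mul_one, mul_pow, mul_comm (max _ _), mul_assoc]
    gcongr
    exact pow_le_rpow_one_sub_mul_max_one hs0 hs1 hδ hδs hβn hA hrδ1
  · rw [max_eq_right hA, max_eq_right hB]
    calc (r * s) ^ k * (r * s ^ 2) ≤ (r * s) ^ k * (r * s ^ 2) * ((r * δ) ^ β)⁻¹ := by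
          refine le_mul_of_one_le_right (by positivity) ?_
          exact one_le_inv₀ (by positivity) |>.2 (Real.rpow_le_one (by positivity) hrδ1 hβ0)
      _ = s ^ (k + 1 + 1) * δ ^ (-β) * (r ^ k * r ^ (1 - β)) := by
          rw [Real.mul_rpow hr0.le hδ.le, Real.rpow_neg hδ.le, Real.rpow_sub hr0, Real.rpow_one]
          field_simp
          ring
      _ ≤ _ := by gcongr; exact le_max_right _ _

lemma min_max_one_pow_mul_le {n : ℕ} {s δ β r : ℝ} (hn : 1 ≤ n) (hs0 : 0 < s) (hs1 : s ≤ 1)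
    (hδ : 0 < δ) (hδs : δ ≤ s ^ 2) (hβ0 : 0 ≤ β) (hβn : β ≤ n) (hr1 : 1 ≤ r) :
    min (max 1 (r * s)) (s / δ) ^ (n - 1) * min (max 1 (r * s ^ 2)) (s ^ 2 / δ)
      ≤ max 1 (s ^ (n + 1) * δ ^ (-β)) * r ^ ((n : ℝ) - β) := by
  rcases le_total r δ⁻¹ with hrδ | hδr
  · calc _ ≤ max 1 (r * s) ^ (n - 1) * max 1 (r * s ^ 2) := by
          gcongr <;> first | positivity | exact min_le_left _ _
      _ ≤ _ := max_one_pow_mul_max_one_le hn hs0 hs1 hδ hδs hβ0 hβn hr1 hrδ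
  · have hδ1 : 1 ≤ δ⁻¹ := one_le_inv₀ hδ |>.2 (hδs.trans (pow_le_one₀ hs0.le hs1))
    have hs2 : 1 ≤ δ⁻¹ * s ^ 2 := by rwa [← div_eq_inv_mul, one_le_div hδ]
    calc _ ≤ (s / δ) ^ (n - 1) * (s ^ 2 / δ) := by
          gcongr <;> first | positivity | exact min_le_right _ _
      _ = max 1 (δ⁻¹ * s) ^ (n - 1) * max 1 (δ⁻¹ * s ^ 2) := by
          rw [max_eq_right hs2, max_eq_right (hs2.trans (by gcongr; nlinarith))]
          ring
      _ ≤ max 1 (s ^ (n + 1) * δ ^ (-β)) * δ⁻¹ ^ ((n : ℝ) - β) :=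
          max_one_pow_mul_max_one_le hn hs0 hs1 hδ hδs hβ0 hβn hδ1 le_rfl
      _ ≤ _ := by gcongr

section MorreyIndicator

variable {n : ℕ} {α p K : ℝ} {Ω : Set (EuclideanSpace ℝ (Fin n))}

lemma setLIntegral_ofReal_indicator_one_rpow {E : Type*} [MeasurableSpace E] (μ : Measure E)
    {Ω : Set E} (hΩ : MeasurableSet Ω) (hp : 0 < p) (B : Set E) :
    ∫⁻ y in B, ENNReal.ofReal (Ω.indicator (fun _ => (1 : ℝ)) y ^ p) ∂μ = μ (Ω ∩ B) := by
  have : (fun y => ENNReal.ofReal (Ω.indicator (fun _ => (1 : ℝ)) y ^ p)) = Ω.indicator 1 := by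
    funext y
    by_cases hy : y ∈ Ω <;> simp [hy, hp.ne']
  rw [this, lintegral_indicator_one hΩ, Measure.restrict_apply hΩ]

lemma ofReal_rpow_mul_rpow_eq (hp : 0 < p) (hK : 0 ≤ K) {r : ℝ} (hr : 0 < r) :
    ENNReal.ofReal (r ^ α) * (ENNReal.ofReal (r ^ (-(n : ℝ))) *
      ENNReal.ofReal (K ^ p * r ^ ((n : ℝ) - α * p))) ^ (1 / p) = ENNReal.ofReal K := by
  rw [← ENNReal.ofReal_mul (by positivity), ENNReal.ofReal_rpow_of_nonneg (by positivity)
    (by positivity), ← ENNReal.ofReal_mul (by positivity)]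
  congr 1
  have : r ^ (-(n : ℝ)) * (K ^ p * r ^ ((n : ℝ) - α * p)) = (K * r ^ (-α)) ^ p := by
    rw [Real.mul_rpow hK (by positivity), ← Real.rpow_mul hr.le, mul_left_comm, ← Real.rpow_add hr]
    ring_nf
  rw [this, one_div, Real.rpow_rpow_inv (by positivity) hp.ne', mul_left_comm, ← Real.rpow_add hr,
    add_neg_cancel, Real.rpow_zero, mul_one]

lemma morreyNorm_indicator_le (hΩ : MeasurableSet Ω) (hp : 0 < p) (hK : 0 ≤ K)
    (h : ∀ x r, 0 < r → volume (Ω ∩ ball x r) ≤ ENNReal.ofReal (K ^ p * r ^ ((n : ℝ) - α * p))) :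
    morreyNorm n α p (Ω.indicator fun _ => 1) ≤ ENNReal.ofReal K := by
  refine iSup_le fun x => iSup_le fun r => iSup_le fun hr => ?_
  rw [setLIntegral_ofReal_indicator_one_rpow _ hΩ hp, ← ofReal_rpow_mul_rpow_eq hp hK hr]
  gcongr
  exact h x r hr

lemma ofReal_le_morreyNorm_indicator (hΩ : MeasurableSet Ω) (hp : 0 < p) (hK : 0 ≤ K)
    {x : EuclideanSpace ℝ (Fin n)} {r : ℝ} (hr : 0 < r)
    (h : ENNReal.ofReal (K ^ p * r ^ ((n : ℝ) - α * p)) ≤ volume (Ω ∩ ball x r)) :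
    ENNReal.ofReal K ≤ morreyNorm n α p (Ω.indicator fun _ => 1) := by
  refine le_iSup_of_le x (le_iSup_of_le r (le_iSup_of_le hr ?_))
  rw [setLIntegral_ofReal_indicator_one_rpow _ hΩ hp, ← ofReal_rpow_mul_rpow_eq hp hK hr]
  gcongr

end MorreyIndicator

section Lattice

variable {n : ℕ} {s δ : ℝ}

noncomputable def latticeSpacing (n : ℕ) (s : ℝ) (j : Fin n) : ℝ :=
  if (j : ℕ) < n - 1 then s⁻¹ else 2 / s ^ 2

noncomputable def latticeBound (n : ℕ) (s δ : ℝ) (j : Fin n) : ℕ :=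
  if (j : ℕ) < n - 1 then ⌊s / (40 * δ)⌋₊ else ⌊s ^ 2 / (80 * δ)⌋₊

lemma lattice_eq_image (hn : 0 < n) {σ : ℝ} (hδ : 0 < δ) :
    {z : EuclideanSpace ℝ (Fin n) |
      (∀ j : Fin n, (j : ℕ) < n - 1 →
        ∃ pj : ℕ, (pj : ℝ) ≤ (1/40) * δ ^ (σ - 1) ∧ z j = (pj : ℝ) * δ ^ (-σ)) ∧
      (∃ q : ℕ, (q : ℝ) ≤ (1/80) * δ ^ (2*σ - 1) ∧
        z ⟨n - 1, by omega⟩ = 2 * (q : ℝ) * δ ^ (-(2*σ)))}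
      = gridPoint (latticeSpacing n (δ ^ σ)) '' gridBox (latticeBound n (δ ^ σ) δ) := by
  set s := δ ^ σ
  have hs : 0 < s := by positivity
  have e₁ : (1/40) * δ ^ (σ - 1) = s / (40 * δ) := by rw [rpow_sub_one hδ.ne']; ring
  have hs2 : δ ^ (2 * σ) = s ^ 2 := by rw [mul_comm, rpow_mul hδ.le, Real.rpow_two]
  have e₂ : (1/80) * δ ^ (2 * σ - 1) = s ^ 2 / (80 * δ) := by
    rw [rpow_sub_one hδ.ne', hs2]; ring
  have e₃ : δ ^ (-σ) = s⁻¹ := rpow_neg hδ.le σ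
  have e₄ : 2 * δ ^ (-(2 * σ)) = 2 / s ^ 2 := by
    rw [rpow_neg hδ.le, hs2]; ring
  have hlast : ∀ j : Fin n, ¬ (j : ℕ) < n - 1 → j = ⟨n - 1, by omega⟩ := fun j hj =>
    Fin.ext (by have := j.isLt; simp only; omega)
  simp only [e₁, e₂, e₃]
  ext z
  constructor
  · rintro ⟨hfirst, q, hq, hzq⟩
    choose pj hpj hzj using hfirst
    refine ⟨fun j => if h : (j : ℕ) < n - 1 then pj j h else q, mem_gridBox.2 fun j => ?_, ?_⟩
    · unfold latticeBound
      split_ifs with h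
      · exact Nat.le_floor (hpj j h)
      · exact Nat.le_floor hq
    · ext j
      rw [gridPoint_apply, latticeSpacing]
      split_ifs with h
      · exact (hzj j h).symm
      · rw [hlast j h, hzq, ← e₄]; ring
  · rintro ⟨m, hm, rfl⟩
    refine ⟨fun j hj => ⟨m j, ?_, by rw [gridPoint_apply, latticeSpacing, if_pos hj]⟩,
      m ⟨n - 1, by omega⟩, ?_, ?_⟩
    · have := mem_gridBox.1 hm j
      rw [latticeBound, if_pos hj] at this
      exact (Nat.le_floor_iff (by positivity)).1 this
    · have := mem_gridBox.1 hm ⟨n - 1, by omega⟩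
      rw [latticeBound, if_neg (by simp)] at this
      exact (Nat.le_floor_iff (by positivity)).1 this
    · rw [gridPoint_apply, latticeSpacing, if_neg (by simp), ← e₄]; ring

lemma latticeSpacing_pos (hs : 0 < s) (j : Fin n) : 0 < latticeSpacing n s j := by
  unfold latticeSpacing; split_ifs <;> positivity

lemma two_le_latticeSpacing (hs0 : 0 < s) (hs : s ≤ 1 / 2) (j : Fin n) :
    2 ≤ latticeSpacing n s j := by
  unfold latticeSpacing
  split_ifs
  · rw [le_inv_comm₀ two_pos hs0]; linarith
  · rw [le_div_iff₀ (by positivity)]; nlinarith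

lemma latticeBound_mul_latticeSpacing_le (hs : 0 < s) (hδ : 0 < δ) (j : Fin n) :
    latticeBound n s δ j * latticeSpacing n s j ≤ 1 / (40 * δ) := by
  unfold latticeBound latticeSpacing
  split_ifs
  · calc ⌊s / (40 * δ)⌋₊ * s⁻¹ ≤ s / (40 * δ) * s⁻¹ := by
          gcongr; exact Nat.floor_le (by positivity)
      _ = 1 / (40 * δ) := by field_simp
  · calc ⌊s ^ 2 / (80 * δ)⌋₊ * (2 / s ^ 2) ≤ s ^ 2 / (80 * δ) * (2 / s ^ 2) := by
          gcongr; exact Nat.floor_le (by positivity)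
      _ = 1 / (40 * δ) := by field_simp; ring

lemma pow_div_le_prod_latticeBound (hn : 0 < n) (hs : 0 < s) (hδ : 0 < δ) :
    s ^ (n + 1) / (80 * δ) ^ n ≤ ∏ j, ((latticeBound n s δ j : ℝ) + 1) := by
  calc s ^ (n + 1) / (80 * δ) ^ n = (s / (80 * δ)) ^ (n - 1) * (s ^ 2 / (80 * δ)) := by
        obtain ⟨k, rfl⟩ : ∃ k, n = k + 1 := ⟨n - 1, by omega⟩
        rw [Nat.add_sub_cancel, div_pow, div_mul_div_comm, ← pow_succ]; ring
    _ ≤ (s / (40 * δ)) ^ (n - 1) * (s ^ 2 / (80 * δ)) := by gcongr; norm_num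
    _ = ∏ j : Fin n, (if (j : ℕ) < n - 1 then s / (40 * δ) else s ^ 2 / (80 * δ)) :=
        (prod_ite_lt_pred hn _ _).symm
    _ ≤ ∏ j, ((latticeBound n s δ j : ℝ) + 1) := by
        refine prod_le_prod (fun j _ => by split_ifs <;> positivity) fun j _ => ?_
        unfold latticeBound
        split_ifs <;> exact (Nat.lt_floor_add_one _).le

lemma card_filter_dist_gridPoint_latticeSpacing_le (hn : 0 < n) {r : ℝ} (hs : 0 < s)
    (hδ : 0 < δ) (h40 : 40 * δ ≤ s) (h80 : 80 * δ ≤ s ^ 2) (hr : 1 ≤ r)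
    (x : EuclideanSpace ℝ (Fin n)) :
    (#{m ∈ gridBox (latticeBound n s δ) | dist (gridPoint (latticeSpacing n s) m) x ≤ r + 1} : ℝ)
      ≤ 5 ^ n * (min (max 1 (r * s)) (s / δ) ^ (n - 1) * min (max 1 (r * s ^ 2)) (s ^ 2 / δ)) := by
  refine (card_filter_dist_gridPoint_le (latticeSpacing_pos hs) _ x (by linarith)).trans ?_
  calc ∏ j, min (2 * (r + 1) / latticeSpacing n s j + 1) (latticeBound n s δ j + 1)
      ≤ ∏ j : Fin n, (if (j : ℕ) < n - 1 then 5 * min (max 1 (r * s)) (s / δ)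
          else 5 * min (max 1 (r * s ^ 2)) (s ^ 2 / δ)) := by
        refine prod_le_prod (fun j _ => le_min (by have := latticeSpacing_pos hs j; positivity)
          (by positivity)) fun j _ => ?_
        have h1 : 1 ≤ s / (40 * δ) := by rw [one_le_div (by positivity)]; exact h40
        have h2 : 1 ≤ s ^ 2 / (80 * δ) := by rw [one_le_div (by positivity)]; exact h80
        unfold latticeSpacing latticeBound
        split_ifs <;> rw [mul_min_of_nonneg _ _ (by norm_num : (0 : ℝ) ≤ 5)]
        · refine min_le_min ?_ ?_
          · rw [div_inv_eq_mul]; nlinarith [le_max_left 1 (r * s), le_max_right 1 (r * s)]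
          · calc (⌊s / (40 * δ)⌋₊ : ℝ) + 1 ≤ s / (40 * δ) + s / (40 * δ) := by
                  gcongr; exact Nat.floor_le (by positivity)
              _ ≤ 5 * (s / δ) := by field_simp; nlinarith
        · refine min_le_min ?_ ?_
          · rw [div_div_eq_mul_div]
            nlinarith [le_max_left 1 (r * s ^ 2), le_max_right 1 (r * s ^ 2)]
          · calc (⌊s ^ 2 / (80 * δ)⌋₊ : ℝ) + 1 ≤ s ^ 2 / (80 * δ) + s ^ 2 / (80 * δ) := by
                  gcongr; exact Nat.floor_le (by positivity)
              _ ≤ 5 * (s ^ 2 / δ) := by field_simp; nlinarith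
    _ = 5 ^ n * (min (max 1 (r * s)) (s / δ) ^ (n - 1) * min (max 1 (r * s ^ 2)) (s ^ 2 / δ)) := by
        rw [prod_ite_lt_pred hn, mul_pow, mul_mul_mul_comm, ← pow_succ, Nat.sub_add_cancel hn]

noncomputable def latticeNbhd (n : ℕ) (s δ : ℝ) : Set (EuclideanSpace ℝ (Fin n)) :=
  ⋃ m ∈ gridBox (latticeBound n s δ), closedBall (gridPoint (latticeSpacing n s) m) 1

lemma measurableSet_latticeNbhd : MeasurableSet (latticeNbhd n s δ) :=
  Finset.measurableSet_biUnion _ fun _ _ => measurableSet_closedBall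

lemma ball_zero_one_subset_latticeNbhd : ball 0 1 ⊆ latticeNbhd n s δ := by
  have h0 : gridPoint (latticeSpacing n s) 0 = 0 := by ext; simp
  rw [← h0]
  exact ball_subset_closedBall.trans
    (Set.subset_iUnion₂_of_subset 0 (mem_gridBox.2 fun _ => Nat.zero_le _) le_rfl)

lemma norm_gridPoint_latticeSpacing_le (hs : 0 < s) (hδ : 0 < δ) {m : Fin n → ℕ}
    (hm : m ∈ gridBox (latticeBound n s δ)) : ‖gridPoint (latticeSpacing n s) m‖ ≤ n / (40 * δ) := by
  refine (norm_gridPoint_le (fun j => (latticeSpacing_pos hs j).le) hm).trans ?_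
  calc _ ≤ ∑ _j : Fin n, 1 / (40 * δ) :=
        sum_le_sum fun j _ => latticeBound_mul_latticeSpacing_le hs hδ j
    _ = n / (40 * δ) := by rw [sum_const, card_univ, Fintype.card_fin, nsmul_eq_mul, mul_one_div]

lemma volume_latticeNbhd_inter_ball_ge (hn : 0 < n) (hs0 : 0 < s) (hs : s ≤ 1 / 2)
    (hδ : 0 < δ) (hδ2 : δ ≤ 1 / 2) :
    ENNReal.ofReal (s ^ (n + 1) / (80 * δ) ^ n) * volume (ball (0 : EuclideanSpace ℝ (Fin n)) 1)
      ≤ volume (latticeNbhd n s δ ∩ ball 0 (n / δ)) := by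
  have hnorm : ∀ m ∈ gridBox (latticeBound n s δ),
      1 + dist (gridPoint (latticeSpacing n s) m) 0 ≤ n / δ := fun m hm => by
    have hn1 : (1 : ℝ) ≤ n := by exact_mod_cast hn
    have h2 : 2 ≤ n / δ := by rw [le_div_iff₀ hδ]; linarith
    rw [dist_zero_right]
    linarith [norm_gridPoint_latticeSpacing_le hs0 hδ hm, show n / (40 * δ) = n / δ / 40 by ring]
  calc ENNReal.ofReal (s ^ (n + 1) / (80 * δ) ^ n) * volume (ball (0 : EuclideanSpace ℝ (Fin n)) 1)
      ≤ (∏ j, (latticeBound n s δ j + 1) : ℕ) * volume (ball (0 : EuclideanSpace ℝ (Fin n)) 1) := by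
        gcongr
        rw [← ENNReal.ofReal_natCast]
        exact ENNReal.ofReal_le_ofReal (by push_cast; exact pow_div_le_prod_latticeBound hn hs0 hδ)
    _ = volume (⋃ m ∈ gridBox (latticeBound n s δ), ball (gridPoint (latticeSpacing n s) m) 1) :=
        (volume_biUnion_ball_gridPoint (two_le_latticeSpacing hs0 hs) _).symm
    _ ≤ volume (latticeNbhd n s δ ∩ ball 0 (n / δ)) :=
        measure_mono (Set.iUnion₂_subset fun m hm => Set.subset_inter
          (Set.subset_iUnion₂_of_subset m hm ball_subset_closedBall)
          (ball_subset_ball' (hnorm m hm)))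

lemma volume_latticeNbhd_inter_ball_le (hn : 0 < n) (hs0 : 0 < s) (hs1 : s ≤ 1) (hδ : 0 < δ)
    (h40 : 40 * δ ≤ s) (h80 : 80 * δ ≤ s ^ 2) {β r : ℝ} (hβ0 : 0 ≤ β) (hβn : β ≤ n) (hr : 1 ≤ r)
    (x : EuclideanSpace ℝ (Fin n)) :
    volume (latticeNbhd n s δ ∩ ball x r)
      ≤ ENNReal.ofReal (5 ^ n * (max 1 (s ^ (n + 1) * δ ^ (-β)) * r ^ ((n : ℝ) - β)))
        * volume (ball (0 : EuclideanSpace ℝ (Fin n)) 1) := by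
  refine (volume_biUnion_closedBall_inter_ball_le _ _ x r).trans ?_
  gcongr
  rw [← ENNReal.ofReal_natCast]
  refine ENNReal.ofReal_le_ofReal
    ((card_filter_dist_gridPoint_latticeSpacing_le hn hs0 hδ h40 h80 hr x).trans ?_)
  exact mul_le_mul_of_nonneg_left
    (min_max_one_pow_mul_le hn hs0 hs1 hδ (by linarith) hβ0 hβn hr) (by positivity)

end Lattice

section MorreyBounds

variable {n : ℕ} {α p s δ : ℝ}

lemma morreyNorm_latticeNbhd_le (hn : 0 < n) (hp : 0 < p) (hs0 : 0 < s) (hs1 : s ≤ 1)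
    (hδ : 0 < δ) (h40 : 40 * δ ≤ s) (h80 : 80 * δ ≤ s ^ 2) (hβ0 : 0 ≤ α * p) (hβn : α * p ≤ n) :
    morreyNorm n α p ((latticeNbhd n s δ).indicator fun _ => 1)
      ≤ ENNReal.ofReal ((5 ^ n * (volume (ball (0 : EuclideanSpace ℝ (Fin n)) 1)).toReal
          * max 1 (s ^ (n + 1) * δ ^ (-(α * p)))) ^ (1 / p)) := by
  set b := (volume (ball (0 : EuclideanSpace ℝ (Fin n)) 1)).toReal
  have hω : volume (ball (0 : EuclideanSpace ℝ (Fin n)) 1) = ENNReal.ofReal b :=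
    (ofReal_toReal measure_ball_lt_top.ne).symm
  refine morreyNorm_indicator_le measurableSet_latticeNbhd hp (by positivity) fun x r hr => ?_
  rw [one_div, Real.rpow_inv_rpow (by positivity) hp.ne']
  rcases le_total r 1 with hr1 | hr1
  · calc volume (latticeNbhd n s δ ∩ ball x r) ≤ volume (ball x r) :=
          measure_mono Set.inter_subset_right
      _ = ENNReal.ofReal (b * r ^ (n : ℝ)) := by
          rw [Measure.addHaar_ball_of_pos _ _ hr, finrank_euclideanSpace_fin, hω,
            ← ENNReal.ofReal_mul (by positivity), Real.rpow_natCast, mul_comm]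
      _ ≤ _ := by
          refine ENNReal.ofReal_le_ofReal (mul_le_mul ?_ ?_ (by positivity) (by positivity))
          · calc b = 1 * b * 1 := by ring
              _ ≤ _ := by
                gcongr
                · exact one_le_pow₀ (by norm_num)
                · exact le_max_left _ _
          · exact Real.rpow_le_rpow_of_exponent_ge hr hr1 (by linarith)
  · calc _ ≤ _ := volume_latticeNbhd_inter_ball_le hn hs0 hs1 hδ h40 h80 hβ0 hβn hr1 x
      _ = _ := by rw [hω, ← ENNReal.ofReal_mul (by positivity)]; ring_nf

lemma le_morreyNorm_latticeNbhd (hn : 0 < n) (hp : 0 < p) (hs0 : 0 < s) (hs : s ≤ 1 / 2)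
    (hδ : 0 < δ) (h40 : 40 * δ ≤ s) (hβ0 : 0 ≤ α * p) :
    ENNReal.ofReal (((volume (ball (0 : EuclideanSpace ℝ (Fin n)) 1)).toReal / (80 * n) ^ n
        * max 1 (s ^ (n + 1) * δ ^ (-(α * p)))) ^ (1 / p))
      ≤ morreyNorm n α p ((latticeNbhd n s δ).indicator fun _ => 1) := by
  set b := (volume (ball (0 : EuclideanSpace ℝ (Fin n)) 1)).toReal
  have hb : 0 < b := toReal_pos (measure_ball_pos _ _ one_pos).ne' measure_ball_lt_top.ne
  have hω : volume (ball (0 : EuclideanSpace ℝ (Fin n)) 1) = ENNReal.ofReal b :=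
    (ofReal_toReal measure_ball_lt_top.ne).symm
  have hn1 : (1 : ℝ) ≤ n := by exact_mod_cast hn
  rw [mul_max_of_nonneg _ _ (by positivity), mul_one,
    Real.rpow_max (by positivity) (by positivity) (by positivity), ENNReal.ofReal_max]
  refine max_le ?_ ?_
  · refine ofReal_le_morreyNorm_indicator (x := 0) measurableSet_latticeNbhd hp (by positivity)
      one_pos ?_
    rw [one_div, Real.rpow_inv_rpow (by positivity) hp.ne', Real.one_rpow, mul_one,
      Set.inter_eq_right.2 ball_zero_one_subset_latticeNbhd, hω]
    exact ENNReal.ofReal_le_ofReal (div_le_self hb.le (one_le_pow₀ (by nlinarith)))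
  · refine ofReal_le_morreyNorm_indicator (x := 0) measurableSet_latticeNbhd hp (by positivity)
      (by positivity : (0 : ℝ) < n / δ) ?_
    rw [one_div, Real.rpow_inv_rpow (by positivity) hp.ne']
    refine le_trans ?_ (volume_latticeNbhd_inter_ball_ge hn hs0 hs hδ (by linarith))
    rw [hω, ← ENNReal.ofReal_mul (by positivity)]
    refine ENNReal.ofReal_le_ofReal ?_
    have key : δ ^ (-(α * p)) * (n / δ) ^ ((n : ℝ) - α * p) ≤ (n : ℝ) ^ n / δ ^ n := by
      calc δ ^ (-(α * p)) * (n / δ) ^ ((n : ℝ) - α * p)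
          = (n : ℝ) ^ ((n : ℝ) - α * p) / δ ^ (n : ℝ) := by
            rw [Real.div_rpow (by positivity) hδ.le, Real.rpow_neg hδ.le, Real.rpow_sub hδ]
            field_simp
        _ ≤ (n : ℝ) ^ (n : ℝ) / δ ^ (n : ℝ) := by
            gcongr
            linarith
        _ = (n : ℝ) ^ n / δ ^ n := by rw [Real.rpow_natCast, Real.rpow_natCast]
    calc b / (80 * n) ^ n * (s ^ (n + 1) * δ ^ (-(α * p))) * (n / δ) ^ ((n : ℝ) - α * p)
        = b / (80 * n) ^ n * s ^ (n + 1) * (δ ^ (-(α * p)) * (n / δ) ^ ((n : ℝ) - α * p)) := by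
          ring
      _ ≤ b / (80 * n) ^ n * s ^ (n + 1) * ((n : ℝ) ^ n / δ ^ n) := by gcongr
      _ = s ^ (n + 1) / (80 * δ) ^ n * b := by field_simp; ring

end MorreyBounds

/-- For the characteristic function `V = χ_Ω` of the `O(1)`-neighbourhood
`Ω` of the lattice `Λ`, with constants depending only on `n, σ, α, p`,
`‖V‖_{𝓛^{α,p}} ∼ max{1, δ^{σ(n+1)/p - α}}`. -/
theorem stmt19 (n : ℕ) (hn : 2 ≤ n) (σ α p : ℝ)
    (hα : 0 < α) (hp1 : 1 ≤ p) (hp2 : p ≤ (n : ℝ) / α) :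
    ∃ c C : ℝ, 0 < c ∧ 0 < C ∧
      ∀ δ : ℝ, 0 < δ → δ < 1 →
        δ ^ σ ≤ 1/2 → δ ^ (1 - σ) ≤ 1/40 → δ ^ (1 - 2*σ) ≤ 1/80 →
      ∀ V : EuclideanSpace ℝ (Fin n) → ℝ,
        V = Set.indicator
          (⋃ z ∈ {z : EuclideanSpace ℝ (Fin n) |
              (∀ j : Fin n, (j : ℕ) < n - 1 →
                ∃ pj : ℕ, (pj : ℝ) ≤ (1/40) * δ ^ (σ - 1) ∧ z j = (pj : ℝ) * δ ^ (-σ)) ∧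
              (∃ q : ℕ, (q : ℝ) ≤ (1/80) * δ ^ (2*σ - 1) ∧
                z ⟨n - 1, by omega⟩ = 2 * (q : ℝ) * δ ^ (-(2*σ)))},
            Metric.closedBall z 1)
          (fun _ => (1 : ℝ)) →
        ENNReal.ofReal (c * max 1 (δ ^ (σ * ((n : ℝ) + 1) / p - α))) ≤ morreyNorm n α p V ∧
          morreyNorm n α p V ≤ ENNReal.ofReal (C * max 1 (δ ^ (σ * ((n : ℝ) + 1) / p - α))) := by
  have hp : 0 < p := by linarith
  have hβ0 : 0 ≤ α * p := by positivity
  have hβn : α * p ≤ n := by rwa [le_div_iff₀' hα] at hp2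
  set b := (volume (ball (0 : EuclideanSpace ℝ (Fin n)) 1)).toReal
  have hb : 0 < b := toReal_pos (measure_ball_pos _ _ one_pos).ne' measure_ball_lt_top.ne
  refine ⟨(b / (80 * n) ^ n) ^ (1 / p), (5 ^ n * b) ^ (1 / p), by positivity, by positivity, ?_⟩
  rintro δ hδ _ hs h40 h80 V rfl
  rw [lattice_eq_image (by omega) hδ, Set.biUnion_image]
  change _ ≤ morreyNorm n α p ((latticeNbhd n (δ ^ σ) δ).indicator _) ∧
    morreyNorm n α p ((latticeNbhd n (δ ^ σ) δ).indicator _) ≤ _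
  have hs0 : 0 < δ ^ σ := by positivity
  have hs2 : δ ^ (2 * σ) = (δ ^ σ) ^ 2 := by rw [mul_comm, Real.rpow_mul hδ.le, Real.rpow_two]
  rw [Real.rpow_sub hδ, Real.rpow_one, div_le_iff₀ hs0] at h40
  rw [Real.rpow_sub hδ, Real.rpow_one, hs2, div_le_iff₀ (by positivity)] at h80
  have hmax : max 1 (δ ^ (σ * ((n : ℝ) + 1) / p - α))
      = max 1 ((δ ^ σ) ^ (n + 1) * δ ^ (-(α * p))) ^ (1 / p) := by
    rw [Real.rpow_max zero_le_one (by positivity) (by positivity), Real.one_rpow,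
      ← Real.rpow_natCast, ← Real.rpow_mul hδ.le, ← Real.rpow_add hδ, ← Real.rpow_mul hδ.le]
    congr 2
    field_simp
    push_cast
    ring
  rw [hmax, ← Real.mul_rpow (by positivity) (by positivity),
    ← Real.mul_rpow (by positivity) (by positivity)]
  exact ⟨le_morreyNorm_latticeNbhd (by omega) hp hs0 hs hδ (by linarith) hβ0,
    morreyNorm_latticeNbhd_le (by omega) hp hs0 (by linarith) hδ (by linarith) (by linarith)
      hβ0 hβn⟩
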